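/- arXiv:1011.3160 — 5 statements merged into one kernel-verified Lean document; each statement's English description precedes it below -/
import Mathlib

section
/- Let Γ = HNN(H, Σ, θ) with H abelian and stable letter t. Then the subgroup G = ⟨H, t^{-1}Ht⟩ of Γ is isomorphic to the amalgamated free product H *_Σ H̃, where H̃ is a copy of H containing Σ via the embedding θ. Concretely, the homomorphism H *_Σ H̃ → Γ defined by the identity on H and by h ↦ t^{-1}ht on H̃ is injective with image G. -/
/-!
The map is well defined because `t⁻¹ θ(σ) t = σ`. Write `A = Σ` and `B = θ(Σ)`. Every element of
the amalgam is `a · x₁ ⋯ xₙ` with `a ∈ A` and the letters `xᵢ` alternately from `H ∖ A` (first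
factor) and `H̃ ∖ B` (second factor). Its image `a h₀ (t⁻¹ g₁ t) h₁ (t⁻¹ g₂ t) h₂ ⋯` is a reduced
word of the HNN extension: a pinch would need some `gᵢ ∈ B` or some inner `hᵢ ∈ A`. By Britton's
lemma such a word lies in `H` only if it contains no `t`, i.e. only if the amalgam word is a single
letter of the first factor. So the preimage of `H` is the first factor, on which the map is the
identity; this gives injectivity.
-/

open HNNExtension Monoid

/-- The two maps of the amalgam `H *_Σ H̃` (both factors being copies of `H`): `Σ` embeds in
the first copy as itself and in the second copy via `θ` (i.e. as the subgroup `B`). -/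
def amalgamMaps {H : Type*} [Group H] (A B : Subgroup H) (φ : A ≃* B) :
    ∀ _ : Bool, (A →* H) :=
  fun i => if i then A.subtype else B.subtype.comp φ.toMonoidHom

namespace HNNExtension

variable {G : Type*} [Group G] {A B : Subgroup G} {φ : A ≃* B}

theorem isChain_flatMap_conj_pairs {l : List (G × G)} (hB : ∀ p ∈ l, p.1 ∉ B)
    (hA : l.IsChain fun p _ => p.2 ∉ A) :
    (l.flatMap fun p => [((-1 : ℤˣ), p.1), (1, p.2)]).IsChain
      fun a b => a.2 ∈ toSubgroup A B a.1 → a.1 = b.1 := by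
  induction l with
  | nil => exact .nil
  | cons p l ih =>
    have hl := List.isChain_cons.mp hA
    simp only [List.flatMap_cons, List.cons_append, List.nil_append, List.isChain_cons_cons,
      toSubgroup_neg_one]
    refine ⟨fun h => absurd h (hB p List.mem_cons_self), ?_⟩
    rw [List.isChain_cons]
    refine ⟨fun q hq h => ?_, ih (fun q hq => hB q (List.mem_cons_of_mem _ hq)) hl.2⟩
    obtain ⟨p', l, rfl⟩ := List.exists_cons_of_ne_nil (l := l) (by rintro rfl; simp at hq)
    exact absurd h (hl.1 p' rfl)

theorem eq_nil_of_prod_conj_mul_mem_range (l : List (G × G)) (hB : ∀ p ∈ l, p.1 ∉ B)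
    (hA : l.IsChain fun p _ => p.2 ∉ A)
    (h : (l.map fun p : G × G => (t⁻¹ * of p.1 * t * of p.2 : HNNExtension G A B φ)).prod ∈
      of.range) :
    l = [] := by
  let w : NormalWord.ReducedWord G A B := ⟨1, _, isChain_flatMap_conj_pairs hB hA⟩
  have hw : w.prod φ = (l.map fun p => t⁻¹ * of p.1 * t * of p.2).prod := by
    simp only [w, NormalWord.ReducedWord.prod, map_one, one_mul]
    clear h w hA hB
    induction l <;> simp [*, mul_assoc]
  have hnil := ReducedWord.toList_eq_nil_of_mem_of_range φ w (hw ▸ h)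
  cases l
  · rfl
  · simp [w] at hnil

def conjOf : G →* HNNExtension G A B φ := (MulAut.conj t⁻¹).toMonoidHom.comp of

@[simp]
theorem conjOf_apply (g : G) : (conjOf g : HNNExtension G A B φ) = t⁻¹ * of g * t := by
  simp [conjOf]

end HNNExtension

namespace Monoid.PushoutI

variable {ι : Type*} {G : ι → Type*} [∀ i, Group (G i)] {H : Type*} [Group H]
  {φ : ∀ i, H →* G i}

theorem NormalWord.reduced {d : NormalWord.Transversal φ} (w : NormalWord d) :
    Reduced φ w.toWord := by
  rintro ⟨i, g⟩ hg hrange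
  have hd := d.compl i
  have : (⟨1, d.one_mem i⟩ : d.set i) = ⟨g, w.normalized i g hg⟩ := by
    rw [← hd.equiv_snd_eq_one_of_mem_of_one_mem (d.one_mem i) hrange,
      hd.equiv_snd_eq_self_of_mem_of_one_mem (one_mem _) (w.normalized i g hg)]
  exact w.ne_one _ hg (congrArg Subtype.val this).symm

theorem map_ofCoprodI_prod {K : Type*} [Monoid K] (F : PushoutI φ →* K)
    (w : CoprodI.Word G) :
    F (ofCoprodI w.prod) = (w.toList.map fun p => F (of p.1 p.2)).prod := by
  simp [CoprodI.Word.prod, map_list_prod, List.map_map, Function.comp_def]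

end Monoid.PushoutI

section PairUp

variable {G : Type*}

def pairUp [One G] : List ((_ : Bool) × G) → List (G × G)
  | p :: q :: r => (p.2, q.2) :: pairUp r
  | [p] => [(p.2, 1)]
  | [] => []

@[simp]
theorem pairUp_eq_nil_iff [One G] {L : List ((_ : Bool) × G)} : pairUp L = [] ↔ L = [] := by
  fun_cases pairUp L <;> simp

theorem isChain_ne_fst_cons_cons {p q : (_ : Bool) × G} {r : List ((_ : Bool) × G)}
    (hL : (p :: q :: r).IsChain (·.1 ≠ ·.1)) (hp : p.1 = false) :
    q.1 = true ∧ r.IsChain (·.1 ≠ ·.1) ∧ ∀ x ∈ r.head?, x.1 = false := by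
  rw [List.isChain_cons_cons, List.isChain_cons] at hL
  obtain ⟨hpq, hqr, hr⟩ := hL
  have hq : q.1 = true := by simpa [hp] using hpq.symm
  exact ⟨hq, hr, fun x hx => by simpa [hq] using (hqr x hx).symm⟩

end PairUp

section Amalgam

variable {H : Type*} [Group H] (A B : Subgroup H) (φ : A ≃* B)

@[simp]
theorem range_amalgamMaps_true : (amalgamMaps A B φ true).range = A :=
  A.range_subtype

@[simp]
theorem range_amalgamMaps_false : (amalgamMaps A B φ false).range = B := by
  simp [amalgamMaps, MonoidHom.range_comp, MulEquiv.range_eq_top, ← MonoidHom.range_eq_map]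

theorem conjOf_comp_amalgamMaps_false :
    (conjOf : H →* HNNExtension H A B φ).comp (amalgamMaps A B φ false) = of.comp A.subtype := by
  ext a
  simp [amalgamMaps, ← equiv_symm_eq_conj]

theorem amalgamMaps_injective : ∀ i, Function.Injective (amalgamMaps A B φ i)
  | true => Subtype.val_injective
  | false => Subtype.val_injective.comp φ.injective

def amalgamToHNN : PushoutI (amalgamMaps A B φ) →* HNNExtension H A B φ :=
  PushoutI.lift (fun i => if i then of else conjOf) (of.comp A.subtype) fun
    | true => rfl
    | false => conjOf_comp_amalgamMaps_false A B φ

variable {A B φ}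

@[simp]
theorem amalgamToHNN_of_true (h : H) :
    amalgamToHNN A B φ (PushoutI.of (φ := amalgamMaps A B φ) true h) = of h := by
  simp [amalgamToHNN]

@[simp]
theorem amalgamToHNN_of_false (h : H) :
    amalgamToHNN A B φ (PushoutI.of (φ := amalgamMaps A B φ) false h) = t⁻¹ * of h * t := by
  simp [amalgamToHNN]

@[simp]
theorem amalgamToHNN_base (a : A) :
    amalgamToHNN A B φ (PushoutI.base (amalgamMaps A B φ) a) = of (a : H) := by
  simp [amalgamToHNN]

theorem prod_amalgamToHNN_eq_pairUp {L : List ((_ : Bool) × H)}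
    (hL : L.IsChain (·.1 ≠ ·.1)) (h₀ : ∀ p ∈ L.head?, p.1 = false) :
    (L.map fun p => amalgamToHNN A B φ (PushoutI.of p.1 p.2)).prod =
      ((pairUp L).map fun p => t⁻¹ * of p.1 * t * of p.2).prod := by
  induction L using pairUp.induct with
  | case1 p q r ih =>
    obtain ⟨hq, hr, hr₀⟩ := isChain_ne_fst_cons_cons hL (h₀ p rfl)
    obtain ⟨i, g⟩ := p
    obtain ⟨j, h⟩ := q
    obtain rfl : i = false := h₀ _ rfl
    obtain rfl : j = true := hq
    simp [pairUp, ih hr hr₀, mul_assoc]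
  | case2 p =>
    obtain ⟨i, g⟩ := p
    obtain rfl : i = false := h₀ _ rfl
    simp [pairUp]
  | case3 => simp [pairUp]

theorem fst_notMem_of_mem_pairUp {L : List ((_ : Bool) × H)}
    (hred : ∀ p ∈ L, p.2 ∉ (amalgamMaps A B φ p.1).range)
    (hL : L.IsChain (·.1 ≠ ·.1)) (h₀ : ∀ p ∈ L.head?, p.1 = false) :
    ∀ x ∈ pairUp L, x.1 ∉ B := by
  induction L using pairUp.induct with
  | case1 p q r ih =>
    obtain ⟨-, hr, hr₀⟩ := isChain_ne_fst_cons_cons hL (h₀ p rfl)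
    have hp : p.2 ∉ B := by simpa [h₀ p rfl] using hred p List.mem_cons_self
    simp only [pairUp, List.mem_cons, forall_eq_or_imp]
    exact ⟨hp, ih (fun x hx => hred x (by simp [hx])) hr hr₀⟩
  | case2 p =>
    simpa [pairUp, h₀ p rfl] using hred p List.mem_cons_self
  | case3 => simp [pairUp]

theorem isChain_pairUp {L : List ((_ : Bool) × H)}
    (hred : ∀ p ∈ L, p.2 ∉ (amalgamMaps A B φ p.1).range)
    (hL : L.IsChain (·.1 ≠ ·.1)) (h₀ : ∀ p ∈ L.head?, p.1 = false) :
    (pairUp L).IsChain fun x _ => x.2 ∉ A := by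
  induction L using pairUp.induct with
  | case1 p q r ih =>
    obtain ⟨hq, hr, hr₀⟩ := isChain_ne_fst_cons_cons hL (h₀ p rfl)
    have hqA : q.2 ∉ A := by simpa [hq] using hred q (by simp)
    rw [pairUp, List.isChain_cons]
    exact ⟨fun _ _ => hqA, ih (fun x hx => hred x (by simp [hx])) hr hr₀⟩
  | case2 p => exact List.isChain_singleton _
  | case3 => exact List.isChain_nil

theorem eq_nil_of_amalgamToHNN_prod_mem_range {L : List ((_ : Bool) × H)}
    (hred : ∀ p ∈ L, p.2 ∉ (amalgamMaps A B φ p.1).range)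
    (hL : L.IsChain (·.1 ≠ ·.1)) (h₀ : ∀ p ∈ L.head?, p.1 = false)
    (h : (L.map fun p => amalgamToHNN A B φ (PushoutI.of p.1 p.2)).prod ∈ of.range) :
    L = [] :=
  pairUp_eq_nil_iff.mp <| eq_nil_of_prod_conj_mul_mem_range _
    (fst_notMem_of_mem_pairUp hred hL h₀) (isChain_pairUp hred hL h₀)
    (prod_amalgamToHNN_eq_pairUp hL h₀ ▸ h)

theorem eq_nil_or_singleton_of_amalgamToHNN_prod_mem_range {L : List ((_ : Bool) × H)}
    (hred : ∀ p ∈ L, p.2 ∉ (amalgamMaps A B φ p.1).range) (hL : L.IsChain (·.1 ≠ ·.1))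
    (h : (L.map fun p => amalgamToHNN A B φ (PushoutI.of p.1 p.2)).prod ∈ of.range) :
    L = [] ∨ ∃ g, L = [⟨true, g⟩] := by
  rcases L with _ | ⟨⟨_ | _, g⟩, L⟩
  · exact .inl rfl
  · exact .inl (eq_nil_of_amalgamToHNN_prod_mem_range hred hL (by simp) h)
  · refine .inr ⟨g, ?_⟩
    rw [List.map_cons, List.prod_cons, amalgamToHNN_of_true,
      Subgroup.mul_mem_cancel_left _ (MonoidHom.mem_range.mpr ⟨g, rfl⟩)] at h
    rw [List.isChain_cons] at hL
    rw [eq_nil_of_amalgamToHNN_prod_mem_range (fun p hp => hred p (List.mem_cons_of_mem _ hp))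
      hL.2 (fun p hp => by simpa using (hL.1 p hp).symm) h]

variable (A B φ)

theorem comap_amalgamToHNN_range_of :
    (of.range).comap (amalgamToHNN A B φ) = (PushoutI.of (φ := amalgamMaps A B φ) true).range := by
  classical
  refine le_antisymm (fun x hx => ?_) (by rintro _ ⟨h, rfl⟩; simp)
  obtain ⟨d⟩ := PushoutI.NormalWord.transversal_nonempty _ (amalgamMaps_injective A B φ)
  obtain ⟨w, rfl⟩ := (PushoutI.NormalWord.equiv (d := d)).symm.surjective x
  have hw : (w.toList.map fun p => amalgamToHNN A B φ (PushoutI.of p.1 p.2)).prod ∈ of.range := by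
    simpa [PushoutI.NormalWord.equiv, PushoutI.NormalWord.prod, PushoutI.map_ofCoprodI_prod,
      Subgroup.mul_mem_cancel_left _ (MonoidHom.mem_range.mpr ⟨_, rfl⟩)] using hx
  have hhead : PushoutI.base (amalgamMaps A B φ) w.head = PushoutI.of true (w.head : H) :=
    (PushoutI.of_apply_eq_base _ true _).symm
  simp only [PushoutI.NormalWord.equiv, Equiv.coe_fn_symm_mk, PushoutI.NormalWord.prod,
    CoprodI.Word.prod, hhead]
  rcases eq_nil_or_singleton_of_amalgamToHNN_prod_mem_range w.reduced w.chain_ne hw with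
    hnil | ⟨g, hg⟩
  · simp [hnil]
  · simp [hg, ← map_mul]

theorem amalgamToHNN_injective : Function.Injective (amalgamToHNN A B φ) := by
  refine (injective_iff_map_eq_one _).mpr fun x hx => ?_
  have hx' : x ∈ (of.range).comap (amalgamToHNN A B φ) := by simp [hx]
  rw [comap_amalgamToHNN_range_of] at hx'
  obtain ⟨h, rfl⟩ := hx'
  rw [amalgamToHNN_of_true, map_eq_one_iff _ (of_injective φ)] at hx
  rw [hx, map_one]

theorem range_amalgamToHNN :
    (amalgamToHNN A B φ).range = Subgroup.closure
      ((Set.range fun h : H => (of h : HNNExtension H A B φ)) ∪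
        (Set.range fun h : H => (t⁻¹ * of h * t : HNNExtension H A B φ))) := by
  refine le_antisymm ?_ (Subgroup.closure_le _ |>.mpr ?_)
  · rintro _ ⟨x, rfl⟩
    induction x using PushoutI.induction_on with
    | of i g =>
      cases i
      · rw [amalgamToHNN_of_false]
        exact Subgroup.subset_closure (.inr ⟨g, rfl⟩)
      · rw [amalgamToHNN_of_true]
        exact Subgroup.subset_closure (.inl ⟨g, rfl⟩)
    | base a =>
      rw [amalgamToHNN_base]
      exact Subgroup.subset_closure (.inl ⟨a, rfl⟩)
    | mul x y hx hy =>
      rw [map_mul]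
      exact mul_mem hx hy
  · rintro _ (⟨g, rfl⟩ | ⟨g, rfl⟩)
    · exact ⟨PushoutI.of true g, amalgamToHNN_of_true g⟩
    · exact ⟨PushoutI.of false g, amalgamToHNN_of_false g⟩

end Amalgam

/-- Let `Γ = HNN(H,Σ,θ)` with `H` abelian and stable letter `t`. The homomorphism
`H *_Σ H̃ → Γ` given by the identity on the first copy of `H` and by `h ↦ t⁻¹ h t` on the
second copy is injective, and its image is the subgroup `G = ⟨H, t⁻¹Ht⟩`. -/
theorem amalgam_embeds_in_hnn {H : Type*} [CommGroup H] (A B : Subgroup H) (φ : A ≃* B) :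
    ∃ f : PushoutI (amalgamMaps A B φ) →* HNNExtension H A B φ,
      (∀ h : H, f (PushoutI.of (φ := amalgamMaps A B φ) true h) = of h) ∧
      (∀ h : H, f (PushoutI.of (φ := amalgamMaps A B φ) false h) = t⁻¹ * of h * t) ∧
      Function.Injective f ∧
      f.range = Subgroup.closure
        ((Set.range fun h : H => (of h : HNNExtension H A B φ)) ∪
          (Set.range fun h : H => (t⁻¹ * of h * t : HNNExtension H A B φ))) :=
  ⟨amalgamToHNN A B φ, amalgamToHNN_of_true, amalgamToHNN_of_false,
    amalgamToHNN_injective A B φ, range_amalgamToHNN A B φ⟩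
end

section
/- For integers n, m with |n|, |m| ≥ 2 and |n| ≠ |m|, the Baumslag-Solitar group BS(n,m) is non-amenable. -/
/-- Relations of the Baumslag–Solitar group `BS(n,m) = ⟨a,b | a bⁿ a⁻¹ = bᵐ⟩`,
with `a` corresponding to `true` and `b` to `false`. -/
def BSRels (n m : ℤ) : Set (FreeGroup Bool) :=
  {FreeGroup.of true * FreeGroup.of false ^ n * (FreeGroup.of true)⁻¹ *
    (FreeGroup.of false ^ m)⁻¹}

/-- The Baumslag–Solitar group `BS(n,m)`. -/
abbrev BS (n m : ℤ) : Type := PresentedGroup (BSRels n m)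

/-- The generator `a` of `BS(n,m)`. -/
def BS.a (n m : ℤ) : BS n m := PresentedGroup.of true

/-- The generator `b` of `BS(n,m)`. -/
def BS.b (n m : ℤ) : BS n m := PresentedGroup.of false

/-- A finitely additive left-invariant probability measure ("mean") on all subsets of `G`. -/
structure LeftInvariantMean (G : Type*) [Group G] where
  m : Set G → ℝ
  nonneg : ∀ s : Set G, 0 ≤ m s
  total : m Set.univ = 1
  addDisjoint : ∀ s t : Set G, Disjoint s t → m (s ∪ t) = m s + m t
  leftInvariant : ∀ (g : G) (s : Set G), m ((g * ·) '' s) = m s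

/-- A group is amenable if it admits a finitely additive left-invariant
probability measure on all of its subsets. -/
def Amenable (G : Type*) [Group G] : Prop := Nonempty (LeftInvariantMean G)

/-!
`BS(n,m)` acts on Britton normal forms `b^c a^{ε₁} b^{r₁} ⋯ a^{εₖ} b^{rₖ}`, in which the exponent
`rᵢ` following `a^{εᵢ}` is a residue modulo `n` (if `εᵢ = 1`) or `m` (if `εᵢ = -1`). Let `P(k, ±)`
be the set of normal forms `b^c a^{±1} ⋯` with `c ≡ k` modulo `m` (for `+`) or `n` (for `-`).
When `|n|, |m| ≥ 2` the four sets `P(0, ±)`, `P(1, ±)` are pairwise disjoint, and `b^k a b^{-k}`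
maps the complement of `P(k, -)` into `P(k, +)`. Pulling an invariant mean on `BS(n,m)` back along
an orbit map gives both `P(0, +) ∪ P(0, -)` and `P(1, +) ∪ P(1, -)` mass at least `1`, while the
total mass is `1`.
-/

namespace LeftInvariantMean

variable {G : Type*} [Group G] (μ : LeftInvariantMean G)

theorem mono {s t : Set G} (h : s ⊆ t) : μ.m s ≤ μ.m t := by
  rw [← Set.union_sdiff_cancel h, μ.addDisjoint s (t \ s) Set.disjoint_sdiff_right]
  exact le_add_of_nonneg_right (μ.nonneg _)

theorem add_compl (s : Set G) : μ.m s + μ.m sᶜ = 1 := by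
  rw [← μ.addDisjoint s sᶜ disjoint_compl_right, Set.union_compl_self, μ.total]

theorem preimage_mul_left (g : G) (s : Set G) : μ.m ((g * ·) ⁻¹' s) = μ.m s := by
  rw [← Set.image_mul_left', μ.leftInvariant]

end LeftInvariantMean

open Function in
theorem not_amenable_of_pingPong {G X ι : Type*} [Group G] [Nonempty X] [Nontrivial ι]
    (ρ : G →* Equiv.Perm X) (g : ι → G) (S T : ι → Set X)
    (hS : Pairwise (Disjoint on S)) (hT : Pairwise (Disjoint on T))
    (hST : ∀ i j, Disjoint (S i) (T j)) (hg : ∀ i, Set.MapsTo (ρ (g i)) (T i)ᶜ (S i)) :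
    ¬ Amenable G := by
  rintro ⟨μ⟩
  obtain ⟨x⟩ := ‹Nonempty X›
  obtain ⟨i, j, hij⟩ := exists_pair_ne ι
  let ν : Set X → ℝ := fun A => μ.m ((ρ · x) ⁻¹' A)
  have hadd : ∀ A B, Disjoint A B → ν (A ∪ B) = ν A + ν B := fun A B h =>
    μ.addDisjoint _ _ (h.preimage _)
  have hcover : ∀ i, 1 ≤ ν (S i) + ν (T i) := by
    intro i
    have hsub : (ρ · x) ⁻¹' (T i)ᶜ ⊆ (g i * ·) ⁻¹' ((ρ · x) ⁻¹' S i) := fun h hh => by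
      simpa using hg i hh
    have := μ.mono hsub
    rw [μ.preimage_mul_left, Set.preimage_compl] at this
    linarith [μ.add_compl ((ρ · x) ⁻¹' T i)]
  have hsum : ν (S i ∪ T i ∪ (S j ∪ T j)) = ν (S i) + ν (T i) + (ν (S j) + ν (T j)) := by
    have hdisj : Disjoint (S i ∪ T i) (S j ∪ T j) :=
      .union_left (.union_right (hS hij) (hST i j)) (.union_right (hST j i).symm (hT hij))
    rw [hadd _ _ hdisj, hadd _ _ (hST i i), hadd _ _ (hST j j)]
  have hle : ν (S i ∪ T i ∪ (S j ∪ T j)) ≤ 1 := μ.total ▸ μ.mono (Set.subset_univ _)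
  linarith [hcover i, hcover j]

namespace BS

variable {d : Bool → ℤ} {s : Bool} {c : ℤ} {L : List (Bool × ℤ)}

-- `(c, [(ε₁, r₁), …, (εₖ, rₖ)])` stands for `b^c a^{ε₁} b^{r₁} ⋯ a^{εₖ} b^{rₖ}`, the exponents
-- `true, false` meaning `1, -1`. With `d true = n` and `d false = m` the relation of `BS(n,m)`
-- reads `a^s b^{d s} = b^{d !s} a^s`. Hence `a^s b^c = b^{d !s * q} a^s b^r` for
-- `c = d s * q + r`, and `a^s` cancels a leading `a^{-s}` when `r = 0`.
def aStep (d : Bool → ℤ) (s : Bool) : ℤ × List (Bool × ℤ) → ℤ × List (Bool × ℤ)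
  | (c, (t, r) :: L) =>
    if t = !s ∧ d s ∣ c then (d (!s) * (c / d s) + r, L)
    else (d (!s) * (c / d s), (s, c % d s) :: (t, r) :: L)
  | (c, []) => (d (!s) * (c / d s), [(s, c % d s)])

theorem aStep_of_not_cancel (h : ∀ r L', L = (!s, r) :: L' → ¬ d s ∣ c) :
    aStep d s (c, L) = (d (!s) * (c / d s), (s, c % d s) :: L) := by
  match L, h with
  | [], _ => rfl
  | (t, r) :: L', h =>
    rw [aStep, if_neg]
    rintro ⟨rfl, hc⟩
    exact h r L' rfl hc

theorem aStep_cancel {r : ℤ} (h : d s ∣ c) :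
    aStep d s (c, (!s, r) :: L) = (d (!s) * (c / d s) + r, L) := by
  simp [aStep, h]

theorem aStep_add_mul (hd : d s ≠ 0) (k : ℤ) (p : ℤ × List (Bool × ℤ)) :
    aStep d s (p.1 + d s * k, p.2) = ((aStep d s p).1 + d (!s) * k, (aStep d s p).2) := by
  obtain ⟨c, L⟩ := p
  have hq : (c + d s * k) / d s = c / d s + k := Int.add_mul_ediv_left _ _ hd
  have hr : (c + d s * k) % d s = c % d s := Int.add_mul_emod_self_left _ _ _
  have hdvd : d s ∣ c + d s * k ↔ d s ∣ c := Int.dvd_add_left (dvd_mul_right _ _)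
  rcases L with _ | ⟨⟨t, r⟩, L⟩
  · simp only [aStep, hq, hr]
    exact Prod.ext (mul_add _ _ _) rfl
  · simp only [aStep, hq, hr, hdvd]
    split_ifs <;> exact Prod.ext (by dsimp only; ring) rfl

-- The chain condition excludes the pinch `a^ε b^0 a^{-ε}`.
def IsReduced (d : Bool → ℤ) (L : List (Bool × ℤ)) : Prop :=
  (∀ e ∈ L, 0 ≤ e.2 ∧ e.2 < |d e.1|) ∧ L.IsChain fun e f => e.2 = 0 → f.1 = e.1

theorem IsReduced.aStep (hd : d s ≠ 0) (hL : IsReduced d L) :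
    IsReduced d (aStep d s (c, L)).2 := by
  have hres : 0 ≤ c % d s ∧ c % d s < |d s| := ⟨Int.emod_nonneg c hd, Int.emod_lt_abs c hd⟩
  by_cases h : ∃ r L', L = (!s, r) :: L' ∧ d s ∣ c
  · obtain ⟨r, L', rfl, hc⟩ := h
    rw [aStep_cancel hc]
    exact ⟨fun e he => hL.1 e (List.mem_cons_of_mem _ he), hL.2.tail⟩
  · push Not at h
    rw [aStep_of_not_cancel h]
    refine ⟨?_, ?_⟩
    · rintro e (_ | ⟨_, he⟩)
      exacts [hres, hL.1 e he]
    · cases L with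
      | nil => exact List.isChain_singleton _
      | cons e L' =>
        obtain ⟨t, r⟩ := e
        refine List.isChain_cons_cons.2 ⟨fun (h0 : c % d s = 0) => show t = s from ?_, hL.2⟩
        by_contra hts
        exact h r L' (by rw [Bool.eq_not.2 hts]) (Int.dvd_of_emod_eq_zero h0)

theorem aStep_not_aStep (hd : ∀ s, d s ≠ 0) (hL : IsReduced d L) :
    aStep d (!s) (aStep d s (c, L)) = (c, L) := by
  by_cases h : ∃ r L', L = (!s, r) :: L' ∧ d s ∣ c
  · obtain ⟨r, L', rfl, hc⟩ := h
    obtain ⟨hr0, hr1⟩ := hL.1 _ List.mem_cons_self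
    have hdiv : (d (!s) * (c / d s) + r) / d (!s) = c / d s := by
      rw [add_comm, Int.add_mul_ediv_left _ _ (hd _), Int.ediv_eq_zero_of_lt_abs hr0 hr1, zero_add]
    have hmod : (d (!s) * (c / d s) + r) % d (!s) = r := by
      rw [add_comm, Int.add_mul_emod_self_left, ← Int.emod_abs, Int.emod_eq_of_lt hr0 hr1]
    rw [aStep_cancel hc, aStep_of_not_cancel, hdiv, hmod, Bool.not_not, Int.mul_ediv_cancel' hc]
    rintro r' L'' rfl hdvd
    have hr : r = 0 := hmod ▸ Int.emod_eq_zero_of_dvd hdvd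
    simpa using (List.isChain_cons_cons.1 hL.2).1 hr
  · push Not at h
    rw [aStep_of_not_cancel h]
    have := aStep_cancel (d := d) (s := !s) (r := c % d s) (L := L) (dvd_mul_right _ (c / d s))
    rw [Bool.not_not] at this
    rw [this, Int.mul_ediv_cancel_left _ (hd _), Int.mul_ediv_add_emod]

abbrev NormalForm (d : Bool → ℤ) : Type := {p : ℤ × List (Bool × ℤ) // IsReduced d p.2}

instance : Inhabited (NormalForm d) :=
  ⟨⟨(0, []), fun _ h => absurd h List.not_mem_nil, List.isChain_nil⟩⟩

@[simps]
def aPerm (hd : ∀ s, d s ≠ 0) : Equiv.Perm (NormalForm d) where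
  toFun p := ⟨aStep d true p.1, p.2.aStep (hd true)⟩
  invFun p := ⟨aStep d false p.1, p.2.aStep (hd false)⟩
  left_inv p := Subtype.ext (aStep_not_aStep hd p.2)
  right_inv p := Subtype.ext (aStep_not_aStep hd p.2)

@[simps]
def bPerm : Equiv.Perm (NormalForm d) where
  toFun p := ⟨(p.1.1 + 1, p.1.2), p.2⟩
  invFun p := ⟨(p.1.1 - 1, p.1.2), p.2⟩
  left_inv p := Subtype.ext <| by simp
  right_inv p := Subtype.ext <| by simp

theorem bPerm_zpow_apply_coe (k : ℤ) (p : NormalForm d) :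
    ((bPerm ^ k) p).1 = (p.1.1 + k, p.1.2) := by
  induction k using Int.induction_on generalizing p with
  | zero => simp
  | succ k ih =>
    rw [zpow_add_one, Equiv.Perm.mul_apply, ih, bPerm_apply_coe]
    exact Prod.ext (by dsimp only; ring) rfl
  | pred k ih =>
    rw [zpow_sub_one, Equiv.Perm.mul_apply, ih, Equiv.Perm.inv_def, bPerm_symm_apply_coe]
    exact Prod.ext (by dsimp only; ring) rfl

theorem aPerm_mul_bPerm_zpow (hd : ∀ s, d s ≠ 0) :
    aPerm hd * bPerm ^ d true = bPerm ^ d false * aPerm hd := by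
  ext p : 1
  apply Subtype.ext
  simpa [bPerm_zpow_apply_coe] using aStep_add_mul (hd true) 1 p.1

def toPerm (hd : ∀ s, d s ≠ 0) : BS (d true) (d false) →* Equiv.Perm (NormalForm d) :=
  PresentedGroup.toGroup (f := fun s => cond s (aPerm hd) bPerm) <| by
    rintro r rfl
    simp [aPerm_mul_bPerm_zpow]

theorem toPerm_a (hd : ∀ s, d s ≠ 0) : toPerm hd (BS.a _ _) = aPerm hd :=
  PresentedGroup.toGroup.of _

theorem toPerm_b (hd : ∀ s, d s ≠ 0) : toPerm hd (BS.b _ _) = bPerm :=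
  PresentedGroup.toGroup.of _

def pingPongSet (d : Bool → ℤ) (k : ℤ) (s : Bool) : Set (NormalForm d) :=
  {p | (∃ r L, p.1.2 = (s, r) :: L) ∧ d (!s) ∣ p.1.1 - k}

theorem disjoint_pingPongSet_of_ne {k k' : ℤ} {s s' : Bool} (h : s ≠ s') :
    Disjoint (pingPongSet d k s) (pingPongSet d k' s') := by
  refine Set.disjoint_left.2 fun p ⟨⟨r, L, hp⟩, _⟩ ⟨⟨r', L', hp'⟩, _⟩ => h ?_
  rw [hp] at hp'
  simp_all

theorem disjoint_pingPongSet_of_not_dvd {k k' : ℤ} {s : Bool} (h : ¬ d (!s) ∣ k - k') :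
    Disjoint (pingPongSet d k s) (pingPongSet d k' s) :=
  Set.disjoint_left.2 fun p ⟨_, hk⟩ ⟨_, hk'⟩ => h <| by
    simpa using dvd_sub hk' hk

theorem mapsTo_conj_aPerm (hd : ∀ s, d s ≠ 0) (k : ℤ) :
    Set.MapsTo ⇑(bPerm ^ k * aPerm hd * bPerm ^ (-k) : Equiv.Perm (NormalForm d))
      (pingPongSet d k false)ᶜ (pingPongSet d k true) := by
  rintro ⟨⟨c, L⟩, hL⟩ hp
  have hstep : aStep d true (c + -k, L) =
      (d false * ((c + -k) / d true), (true, (c + -k) % d true) :: L) :=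
    aStep_of_not_cancel fun r L' hL' hdvd => hp ⟨⟨r, L', hL'⟩, by simpa [sub_eq_add_neg] using hdvd⟩
  simp only [pingPongSet, Set.mem_ofPred_eq, Equiv.Perm.mul_apply, bPerm_zpow_apply_coe,
    aPerm_apply_coe, hstep, add_sub_cancel_right]
  exact ⟨⟨_, L, rfl⟩, dvd_mul_right _ _⟩

end BS

theorem bs_not_amenable_general (n m : ℤ) (hn : 2 ≤ |n|) (hm : 2 ≤ |m|) :
    ¬ Amenable (BS n m) := by
  obtain ⟨d, rfl, rfl⟩ : ∃ d : Bool → ℤ, d true = n ∧ d false = m :=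
    ⟨fun s => cond s n m, rfl, rfl⟩
  have hd : ∀ s, 2 ≤ |d s| := Bool.forall_bool.2 ⟨hm, hn⟩
  have hd0 : ∀ s, d s ≠ 0 := fun s => abs_pos.1 (by linarith [hd s])
  have hdvd : ∀ s, ¬ d s ∣ 1 := fun s h => by
    linarith [hd s, Int.le_of_dvd one_pos ((abs_dvd _ _).2 h)]
  refine not_amenable_of_pingPong (BS.toPerm hd0)
    (fun i => cond i (BS.b _ _ * BS.a _ _ * (BS.b _ _)⁻¹) (BS.a _ _))
    (fun i => cond i (BS.pingPongSet d 1 true) (BS.pingPongSet d 0 true))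
    (fun i => cond i (BS.pingPongSet d 1 false) (BS.pingPongSet d 0 false))
    (pairwise_on_bool.2 (BS.disjoint_pingPongSet_of_not_dvd (hdvd _)))
    (pairwise_on_bool.2 (BS.disjoint_pingPongSet_of_not_dvd (hdvd _)))
    (by rintro (_ | _) (_ | _) <;> exact BS.disjoint_pingPongSet_of_ne (by decide)) ?_
  rintro (_ | _)
  · simpa [BS.toPerm_a] using BS.mapsTo_conj_aPerm hd0 0
  · simpa [BS.toPerm_a, BS.toPerm_b] using BS.mapsTo_conj_aPerm hd0 1

/-- For `|n|,|m| ≥ 2` and `|n| ≠ |m|`, the Baumslag–Solitar group `BS(n,m)` is non-amenable. -/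
theorem bs_not_amenable (n m : ℤ) (hn : 2 ≤ |n|) (hm : 2 ≤ |m|) (hnm : |n| ≠ |m|) :
    ¬ Amenable (BS n m) :=
  bs_not_amenable_general n m hn hm
end

section
/- For integers n, m with |n|, |m| ≥ 2 and |n| ≠ |m|, the Baumslag-Solitar group BS(n,m) is ICC: every element other than the identity has an infinite conjugacy class. -/
open Multiplicative Subgroup HNNExtension

theorem List.eq_replicate_of_replicate_append_comm {α : Type*} {a : α} {p : ℕ} (hp : p ≠ 0) :
    ∀ {l : List α}, replicate p a ++ l = l ++ replicate p a → l = replicate l.length a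
  | [], _ => rfl
  | b :: l, h => by
    obtain rfl : b = a := by
      obtain ⟨q, rfl⟩ := Nat.exists_eq_succ_of_ne_zero hp
      simpa [replicate_succ, eq_comm] using congrArg head? h
    have : replicate p b ++ l = l ++ replicate p b := by
      rw [← cons_inj_right b, ← cons_append, ← replicate_succ, replicate_succ', append_assoc]
      simpa using h
    rw [length_cons, replicate_succ, ← eq_replicate_of_replicate_append_comm hp this]

theorem infinite_range_conj_of_not_commute_zpow {Γ : Type*} [Group Γ] {x y : Γ}
    (h : ∀ k : ℤ, k ≠ 0 → ¬Commute (y ^ k) x) : (Set.range fun g => g * x * g⁻¹).Infinite := by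
  refine Set.infinite_of_injective_forall_mem (f := fun k : ℤ => y ^ k * x * (y ^ k)⁻¹)
    (fun k l hkl => ?_) fun k => ⟨_, rfl⟩
  by_contra hne
  refine h (k - l) (sub_ne_zero.2 hne) ?_
  rw [Commute, SemiconjBy, ← mul_inv_eq_iff_eq_mul]
  calc y ^ (k - l) * x * (y ^ (k - l))⁻¹ = (y ^ l)⁻¹ * (y ^ k * x * (y ^ k)⁻¹) * y ^ l := by group
    _ = x := by simp only [hkl]; group

theorem MulEquiv.infinite_range_conj_iff {Γ Δ : Type*} [Group Γ] [Group Δ] (e : Γ ≃* Δ) (g : Γ) :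
    (Set.range fun h => h * e g * h⁻¹).Infinite ↔ (Set.range fun h => h * g * h⁻¹).Infinite := by
  have : (fun h => h * e g * h⁻¹) = (e ∘ fun h => h * g * h⁻¹) ∘ e.symm := by
    funext h; simp
  rw [this, e.symm.surjective.range_comp, Set.range_comp, Set.infinite_image_iff e.injective.injOn]

namespace HNNExtension

variable {G : Type*} [Group G] {A B : Subgroup G} {φ : A ≃* B}

open NormalWord

theorem ReducedWord.exists_prod_eq (x : HNNExtension G A B φ) :
    ∃ w : ReducedWord G A B, w.prod φ = x := by
  obtain ⟨d⟩ := TransversalPair.nonempty G A B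
  exact ⟨(equiv φ d x).toReducedWord, (equiv φ d).symm_apply_apply x⟩

noncomputable def tSignature (x : HNNExtension G A B φ) : List ℤˣ :=
  (ReducedWord.exists_prod_eq x).choose.toList.map Prod.fst

theorem tSignature_prod (w : ReducedWord G A B) :
    tSignature (w.prod φ) = w.toList.map Prod.fst :=
  (ReducedWord.map_fst_eq_and_of_prod_eq φ (ReducedWord.exists_prod_eq _).choose_spec).1

theorem mem_range_of_tSignature_eq_nil {x : HNNExtension G A B φ} (hx : tSignature x = []) :
    x ∈ (of : G →* HNNExtension G A B φ).range := by
  obtain ⟨w, rfl⟩ := ReducedWord.exists_prod_eq x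
  rw [tSignature_prod, List.map_eq_nil_iff] at hx
  exact ⟨w.head, by simp [ReducedWord.prod, hx]⟩

theorem tSignature_t_zpow_mul {x : HNNExtension G A B φ} {u : ℤˣ}
    (hx : (tSignature x).head? = some u) :
    tSignature (t ^ (u : ℤ) * x) = u :: tSignature x := by
  obtain ⟨w, rfl⟩ := ReducedWord.exists_prod_eq x
  rw [tSignature_prod, List.head?_map, Option.map_eq_some_iff] at hx
  obtain ⟨a, ha, rfl⟩ := hx
  let w' : ReducedWord G A B :=
    ⟨1, (a.1, w.head) :: w.toList, List.isChain_cons.2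
      ⟨fun b hb _ => (congrArg Prod.fst (Option.some_injective _ (ha.symm.trans hb)) : a.1 = b.1),
        w.chain⟩⟩
  have hw' : w'.prod φ = t ^ (a.1 : ℤ) * w.prod φ := by
    simp [w', ReducedWord.prod, mul_assoc]
  rw [← hw', tSignature_prod, tSignature_prod]
  rfl

theorem tSignature_mul_t_zpow {x : HNNExtension G A B φ} {u : ℤˣ}
    (hx : (tSignature x).getLast? = some u) :
    tSignature (x * t ^ (u : ℤ)) = tSignature x ++ [u] := by
  obtain ⟨w, rfl⟩ := ReducedWord.exists_prod_eq x
  rw [tSignature_prod, List.getLast?_map, Option.map_eq_some_iff] at hx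
  obtain ⟨a, ha, rfl⟩ := hx
  let w' : ReducedWord G A B :=
    ⟨w.head, w.toList ++ [(a.1, 1)], List.isChain_append.2 ⟨w.chain, List.isChain_singleton _,
      fun c hc b hb _ => by
        obtain rfl := Option.some_injective _ (ha.symm.trans hc)
        obtain rfl := Option.some_injective _ hb
        rfl⟩⟩
  have hw' : w'.prod φ = w.prod φ * t ^ (a.1 : ℤ) := by
    simp [w', ReducedWord.prod, mul_assoc]
  rw [← hw', tSignature_prod, tSignature_prod]
  simp [w']

theorem tSignature_t_zpow_pow_mul {x : HNNExtension G A B φ} {u : ℤˣ}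
    (hx : (tSignature x).head? = some u) (p : ℕ) :
    tSignature ((t ^ (u : ℤ)) ^ p * x) = List.replicate p u ++ tSignature x := by
  induction p with
  | zero => simp
  | succ p ih =>
    have hhead : (tSignature ((t ^ (u : ℤ)) ^ p * x)).head? = some u := by
      cases p <;> simp_all [List.replicate_succ]
    rw [pow_succ', mul_assoc, tSignature_t_zpow_mul hhead, ih, List.replicate_succ,
      List.cons_append]

theorem tSignature_mul_t_zpow_pow {x : HNNExtension G A B φ} {u : ℤˣ}
    (hx : (tSignature x).getLast? = some u) (p : ℕ) :
    tSignature (x * (t ^ (u : ℤ)) ^ p) = tSignature x ++ List.replicate p u := by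
  induction p with
  | zero => simp
  | succ p ih =>
    have hlast : (tSignature (x * (t ^ (u : ℤ)) ^ p)).getLast? = some u := by
      cases p <;> simp_all [List.replicate_succ', List.getLast?_append]
    rw [pow_succ, ← mul_assoc, tSignature_mul_t_zpow hlast, ih, List.replicate_succ',
      List.append_assoc]

noncomputable def tExponentSum : HNNExtension G A B φ →* Multiplicative ℤ :=
  lift 1 (ofAdd 1) (by simp)

@[simp] theorem tExponentSum_of (g : G) : tExponentSum (of g : HNNExtension G A B φ) = 1 := by
  simp [tExponentSum]

@[simp] theorem tExponentSum_t : tExponentSum (t : HNNExtension G A B φ) = ofAdd 1 := by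
  simp [tExponentSum]

theorem tExponentSum_eq_sum_tSignature (x : HNNExtension G A B φ) :
    tExponentSum x = ofAdd ((tSignature x).map (↑)).sum := by
  obtain ⟨w, rfl⟩ := ReducedWord.exists_prod_eq x
  rw [tSignature_prod, ofAdd_list_prod]
  simp [ReducedWord.prod, map_list_prod, Function.comp_def, ← ofAdd_zsmul]

theorem mem_range_of_commute_t_zpow {x : HNNExtension G A B φ} (hx : tExponentSum x = 1)
    {k : ℤ} (hk : k ≠ 0) (hc : Commute (t ^ k) x) :
    x ∈ (of : G →* HNNExtension G A B φ).range := by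
  rcases hs : tSignature x with _ | ⟨u, s⟩
  · exact mem_range_of_tSignature_eq_nil hs
  exfalso
  set p := k.natAbs
  have hp : p ≠ 0 := Int.natAbs_ne_zero.2 hk
  have hcp : Commute ((t ^ (u : ℤ)) ^ p) x := by
    have : Commute (t ^ (p : ℤ)) x := by
      rcases Int.natAbs_eq k with h | h
      · rwa [h] at hc
      · rwa [h, zpow_neg, Commute.inv_left_iff] at hc
    rw [← zpow_natCast, ← zpow_mul, mul_comm, zpow_mul]
    exact this.zpow_left _
  have hhead : (tSignature x).head? = some u := by simp [hs]
  obtain ⟨v, hv⟩ : ∃ v, (tSignature x).getLast? = some v :=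
    ⟨_, List.getLast?_eq_some_getLast (hs ▸ List.cons_ne_nil u s)⟩
  by_cases huv : v = u
  · subst huv
    have h := congrArg tSignature hcp.eq
    rw [tSignature_t_zpow_pow_mul hhead, tSignature_mul_t_zpow_pow hv] at h
    rw [tExponentSum_eq_sum_tSignature, List.eq_replicate_of_replicate_append_comm hp h,
      ofAdd_eq_one, List.map_replicate, List.sum_replicate, smul_eq_zero] at hx
    simp [hs] at hx
  · obtain rfl := Int.units_ne_iff_eq_neg.1 huv
    have hlast : (tSignature ((t ^ (u : ℤ)) ^ p * x)).getLast? = some (-u) := by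
      rw [tSignature_t_zpow_pow_mul hhead, List.getLast?_append, hv]
      rfl
    have h := tSignature_mul_t_zpow_pow hlast p
    rw [tSignature_t_zpow_pow_mul hhead, hcp.eq, Units.val_neg, zpow_neg, inv_pow,
      mul_inv_cancel_right] at h
    have := congrArg List.length h
    simp only [List.length_append, List.length_replicate] at this
    omega

end HNNExtension

namespace BS

theorem a_mul_b_zpow_mul_a_inv (n m : ℤ) : a n m * b n m ^ n * (a n m)⁻¹ = b n m ^ m :=
  mul_inv_eq_one.1 <| by
    simpa [a, b, PresentedGroup.of] using PresentedGroup.one_of_mem (rels := BSRels n m) rfl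

theorem a_mul_b_zpow (n m k : ℤ) : a n m * b n m ^ (k * n) = b n m ^ (k * m) * a n m := by
  rw [← mul_inv_eq_iff_eq_mul, mul_comm, zpow_mul, ← conj_zpow, a_mul_b_zpow_mul_a_inv,
    ← zpow_mul, mul_comm]

theorem zpowersHom_ofAdd_injective {n : ℤ} (hn : n ≠ 0) :
    Function.Injective (zpowersHom (Multiplicative ℤ) (ofAdd n)) := by
  intro j k h
  have := congrArg toAdd h
  simp only [zpowersHom_apply, toAdd_zpow, toAdd_ofAdd, smul_eq_mul] at this
  exact toAdd.injective (mul_right_cancel₀ hn this)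

theorem div_zpow_ne_one {n m : ℤ} (hnm : |n| ≠ |m|) {s : ℤ} (hs : s ≠ 0) : (m / n : ℚ) ^ s ≠ 1 := by
  have habs : |(m / n : ℚ)| ≠ 1 := by
    rcases eq_or_ne n 0 with rfl | hn0
    · simp
    rw [abs_div, Ne, div_eq_one_iff_eq (by simpa using hn0)]
    exact_mod_cast hnm.symm
  intro h
  exact hs ((zpow_eq_one_iff_right₀ (abs_nonneg _) habs).1 (by rw [← abs_zpow, h, abs_one]))

variable {n m : ℤ} (hn : n ≠ 0) (hm : m ≠ 0)

noncomputable def zpowersEquiv : zpowers (ofAdd n) ≃* zpowers (ofAdd m) :=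
  (MonoidHom.ofInjective (zpowersHom_ofAdd_injective hn)).symm.trans
    (MonoidHom.ofInjective (zpowersHom_ofAdd_injective hm))

theorem zpowersEquiv_zpow (k : ℤ) :
    zpowersEquiv hn hm ⟨ofAdd n ^ k, zpow_mem_zpowers _ k⟩ =
      ⟨ofAdd m ^ k, zpow_mem_zpowers _ k⟩ := by
  apply Subtype.ext
  change zpowersHom _ (ofAdd m) ((MonoidHom.ofInjective (zpowersHom_ofAdd_injective hn)).symm
    (MonoidHom.ofInjective (zpowersHom_ofAdd_injective hn) (ofAdd k))) = _
  rw [MulEquiv.symm_apply_apply]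
  rfl

abbrev HNN : Type :=
  HNNExtension (Multiplicative ℤ) (zpowers (ofAdd n)) (zpowers (ofAdd m)) (zpowersEquiv hn hm)

theorem t_mul_of_zpow (k : ℤ) :
    (t : HNN hn hm) * of (ofAdd n ^ k) = of (ofAdd m ^ k) * t := by
  simpa [zpowersEquiv_zpow] using t_mul_of (φ := zpowersEquiv hn hm) ⟨_, zpow_mem_zpowers _ k⟩

noncomputable def toHNN : BS n m →* HNN hn hm :=
  PresentedGroup.toGroup (f := fun i => cond i t (of (ofAdd 1))) <| by
    rintro _ rfl
    have h := t_mul_of_zpow hn hm 1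
    simp only [zpow_one] at h
    have hz (k : ℤ) : (of (ofAdd 1) : HNN hn hm) ^ k = of (ofAdd k) := by
      simp [← map_zpow, ← ofAdd_zsmul]
    simp [hz, h]

@[simp] theorem toHNN_a : toHNN hn hm (a n m) = t := PresentedGroup.toGroup.of _

@[simp] theorem toHNN_b : toHNN hn hm (b n m) = of (ofAdd 1) := PresentedGroup.toGroup.of _

noncomputable def ofHNN : HNN hn hm →* BS n m :=
  lift (zpowersHom _ (b n m)) (a n m) <| by
    rintro ⟨_, k, rfl⟩
    simpa [zpowersEquiv_zpow] using a_mul_b_zpow n m k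

@[simp] theorem ofHNN_t : ofHNN hn hm t = a n m := lift_t ..

@[simp] theorem ofHNN_of (g : Multiplicative ℤ) : ofHNN hn hm (of g) = b n m ^ toAdd g := lift_of ..

noncomputable def equivHNN : BS n m ≃* HNN hn hm :=
  MonoidHom.toMulEquiv (toHNN hn hm) (ofHNN hn hm)
    (PresentedGroup.ext fun
      | true => show ofHNN hn hm (toHNN hn hm (a n m)) = a n m by simp
      | false => show ofHNN hn hm (toHNN hn hm (b n m)) = b n m by simp)
    (hom_ext (MonoidHom.ext_mint (by simp)) (by simp))

noncomputable def affineRep : HNN hn hm →* Equiv.Perm ℚ :=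
  lift ((MulAction.toPermHom (Multiplicative ℚ) ℚ).comp
      (AddMonoidHom.toMultiplicative (Int.castAddHom ℚ)))
    (Equiv.mulLeft₀ (m / n : ℚ) (by simp [hn, hm])) <| by
    rintro ⟨_, k, rfl⟩
    ext q
    simp [zpowersEquiv_zpow, mul_add, mul_left_comm _ (k : ℚ), hn]

@[simp] theorem affineRep_of (g : Multiplicative ℤ) (q : ℚ) :
    affineRep hn hm (of g) q = toAdd g + q := by
  simp [affineRep]

@[simp] theorem affineRep_t (q : ℚ) : affineRep hn hm t q = m / n * q := by
  simp [affineRep]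

theorem affineRep_apply_add (x : HNN hn hm) (q j : ℚ) :
    affineRep hn hm x (q + j) =
      affineRep hn hm x q + (m / n : ℚ) ^ toAdd (tExponentSum x) * j := by
  induction x using HNNExtension.induction_on generalizing q j with
  | of g => simp [add_assoc]
  | t => simp [mul_add]
  | mul x y hx hy =>
    simp only [map_mul, Equiv.Perm.mul_apply, hx, hy, toAdd_mul]
    rw [zpow_add₀ (by simp [hn, hm])]
    ring
  | inv x hx =>
    apply (affineRep hn hm x).injective
    simp only [map_inv, Equiv.Perm.inv_def, Equiv.apply_symm_apply, hx, toAdd_inv, zpow_neg]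
    field_simp

theorem eq_one_of_commute_of (hnm : |n| ≠ |m|) {x : HNN hn hm} (hx : tExponentSum x ≠ 1)
    {g : Multiplicative ℤ} (h : Commute x (of g)) : g = 1 := by
  by_contra hg
  have hg' : ((toAdd g : ℤ) : ℚ) ≠ 0 := by simpa using hg
  have := congrArg (fun y => affineRep hn hm y 0) h.eq
  simp only [map_mul, Equiv.Perm.mul_apply, affineRep_of, add_zero] at this
  rw [← zero_add ((toAdd g : ℤ) : ℚ), affineRep_apply_add, zero_add, add_comm, add_left_inj,
    mul_eq_right₀ hg'] at this
  exact div_zpow_ne_one hnm (by simpa using hx) this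

theorem infinite_range_conj (hnm : |n| ≠ |m|) {x : HNN hn hm} (hx : x ≠ 1) :
    (Set.range fun h => h * x * h⁻¹).Infinite := by
  by_cases hσ : tExponentSum x = 1
  · refine infinite_range_conj_of_not_commute_zpow (y := t) fun k hk hc => hx ?_
    obtain ⟨g, rfl⟩ := mem_range_of_commute_t_zpow hσ hk hc
    rw [eq_one_of_commute_of hn hm hnm (by simpa using hk) hc, map_one]
  · refine infinite_range_conj_of_not_commute_zpow (y := of (ofAdd 1)) fun k hk hc => hk ?_
    rw [← map_zpow] at hc
    simpa using eq_one_of_commute_of hn hm hnm hσ hc.symm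

end BS

/-- For `|n|,|m| ≥ 2` and `|n| ≠ |m|`, the group `BS(n,m)` is ICC: every non-identity
element has an infinite conjugacy class. -/
theorem bs_icc (n m : ℤ) (hn : 2 ≤ |n|) (hm : 2 ≤ |m|) (hnm : |n| ≠ |m|) :
    ∀ g : BS n m, g ≠ 1 → (Set.range fun h : BS n m => h * g * h⁻¹).Infinite := by
  have hn0 : n ≠ 0 := by rintro rfl; simp at hn
  have hm0 : m ≠ 0 := by rintro rfl; simp at hm
  intro g hg
  rw [← (BS.equivHNN hn0 hm0).infinite_range_conj_iff]
  exact BS.infinite_range_conj hn0 hm0 hnm ((BS.equivHNN hn0 hm0).map_ne_one_iff.2 hg)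
end

section
/- Let Γ = HNN(H, Σ, θ) be an HNN extension with H abelian, 2 ≤ |H/Σ| < ∞ and 3 ≤ |H/θ(Σ)|. Then Γ contains a non-amenable subgroup that centralizes Σ, namely G = ⟨H, t^{-1}Ht⟩. -/
open HNNExtension

/-!
Pick `a ∉ Σ` and `b₀, b₁` such that `1, b₀, b₁` lie in distinct cosets of `θ(Σ)`. The commutators
`zᵢ = ⁅a, t⁻¹ bᵢ t⁆` lie in `G`, and they freely generate a free group: the HNN normal form of a
reduced word in the `zᵢ` is the concatenation of the normal forms of its letters, except that at a
junction of letters of opposite signs the `a`-syllables cancel and the syllables `t⁻¹ bᵢ⁻¹ t`,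
`t⁻¹ bⱼ t` merge into `t⁻¹ bᵢ⁻¹ bⱼ t` with `i ≠ j`, which is still not in `Σ`. So Britton's lemma
applies. A free group of rank two carries no invariant mean (ping-pong on the first letter of the
reduced word), and an invariant mean restricts to subgroups. Finally `H` is abelian and
`t⁻¹ H t` centralizes `t⁻¹ θ(Σ) t = Σ`.
-/

namespace LeftInvariantMean

variable {K : Type*} [Group K] (μ : LeftInvariantMean K)

theorem m_compl (s : Set K) : μ.m sᶜ = 1 - μ.m s := by
  have := μ.addDisjoint s sᶜ disjoint_compl_right
  rw [Set.union_compl_self, μ.total] at this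
  linarith

theorem m_mono {s u : Set K} (h : s ⊆ u) : μ.m s ≤ μ.m u := by
  have := μ.addDisjoint s (u \ s) Set.disjoint_sdiff_right
  rw [Set.union_sdiff_cancel h] at this
  linarith [μ.nonneg (u \ s)]

theorem m_le_one (s : Set K) : μ.m s ≤ 1 :=
  μ.total ▸ μ.m_mono (Set.subset_univ s)

def comap {G : Type*} [Group G] (f : G →* K) (π : K → G)
    (hπ : ∀ g k, π (f g * k) = g * π k) : LeftInvariantMean G where
  m s := μ.m (π ⁻¹' s)
  nonneg _ := μ.nonneg _
  total := μ.total
  addDisjoint s t hst := μ.addDisjoint _ _ (hst.preimage π)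
  leftInvariant g s := by
    have : π ⁻¹' ((g * ·) '' s) = (f g * ·) '' (π ⁻¹' s) := by
      ext k
      simp only [Set.image_mul_left, Set.mem_preimage, ← map_inv, hπ]
    simp only [this, μ.leftInvariant]

end LeftInvariantMean

theorem Amenable.of_injective {G K : Type*} [Group G] [Group K] {f : G →* K}
    (hf : Function.Injective f) (h : Amenable K) : Amenable G := by
  obtain ⟨μ⟩ := h
  -- writing `k = h * τ` with `h ∈ f.range` and `τ` in a right transversal, `k ↦ h` is equivariant
  obtain ⟨T, hT, -⟩ := f.range.exists_isComplement_right 1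
  let e := MonoidHom.ofInjective hf
  refine ⟨μ.comap f (fun k => e.symm (hT.equiv k).1) fun g k => ?_⟩
  rw [show f g = (e g : K) from rfl, hT.equiv_mul_left, map_mul, MulEquiv.symm_apply_apply]

namespace FreeGroup

theorem toWord_inv_of_mul {α : Type*} [DecidableEq α] {i : α} {w : FreeGroup α}
    (h : w.toWord.head? ≠ some (i, true)) :
    ((of i)⁻¹ * w).toWord = (i, false) :: w.toWord := by
  have hred : IsReduced ((i, false) :: w.toWord) := by
    rcases hw : w.toWord with - | ⟨⟨j, s⟩, L⟩
    · exact IsReduced.singleton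
    · rw [hw] at h
      refine isReduced_cons_cons.2 ⟨?_, hw ▸ isReduced_toWord⟩
      rintro (rfl : i = j)
      cases s
      · rfl
      · exact absurd rfl h
  have : (of i)⁻¹ * w = mk ((i, false) :: w.toWord) := by
    rw [← List.singleton_append, ← mul_mk, mk_toWord]; rfl
  rw [this, toWord_mk, hred.reduce_eq]

theorem not_amenable {α : Type*} [Nontrivial α] : ¬ Amenable (FreeGroup α) := by
  classical
  rintro ⟨μ⟩
  let C (p : α × Bool) : Set (FreeGroup α) := {w | w.toWord.head? = some p}
  have hC : ∀ {p q}, p ≠ q → Disjoint (C p) (C q) := fun hpq =>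
    Set.disjoint_left.2 fun w hp hq => hpq (Option.some_injective _ (hp.symm.trans hq))
  have hsum (i : α) : 1 ≤ μ.m (C (i, true) ∪ C (i, false)) := by
    have hsub : ((of i)⁻¹ * ·) '' (C (i, true))ᶜ ⊆ C (i, false) := by
      rintro _ ⟨w, hw, rfl⟩
      simp [C, toWord_inv_of_mul hw]
    have := μ.m_mono hsub
    rw [μ.leftInvariant, μ.m_compl] at this
    rw [μ.addDisjoint _ _ (hC (by simp))]
    linarith
  obtain ⟨x, y, hxy⟩ := exists_pair_ne α
  have hdisj : Disjoint (C (x, true) ∪ C (x, false)) (C (y, true) ∪ C (y, false)) := by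
    simp only [Set.disjoint_union_left, Set.disjoint_union_right]
    exact ⟨⟨hC (by simp [hxy]), hC (by simp [hxy])⟩, hC (by simp [hxy]), hC (by simp [hxy])⟩
  have := μ.m_le_one ((C (x, true) ∪ C (x, false)) ∪ (C (y, true) ∪ C (y, false)))
  rw [μ.addDisjoint _ _ hdisj] at this
  linarith [hsum x, hsum y]

end FreeGroup

theorem Subgroup.not_amenable_of_injective_lift {K ι : Type*} [Group K] [Nontrivial ι]
    {S : Subgroup K} {z : ι → K} (hz : ∀ i, z i ∈ S)
    (hinj : Function.Injective (FreeGroup.lift z)) :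
    ¬ Amenable S := by
  let f : FreeGroup ι →* S := FreeGroup.lift fun i => ⟨z i, hz i⟩
  have hf : S.subtype.comp f = FreeGroup.lift z := FreeGroup.ext_hom _ _ fun i => by simp [f]
  refine fun h => FreeGroup.not_amenable (Amenable.of_injective (f := f) ?_ h)
  exact Function.Injective.of_comp (f := S.subtype) (by rwa [← MonoidHom.coe_comp, hf])

theorem Subgroup.exists_notMem_pairwise_inv_mul_notMem {G : Type*} [Group G] {B : Subgroup G}
    (h : ∃ x y z : G ⧸ B, x ≠ y ∧ x ≠ z ∧ y ≠ z) :
    ∃ b : Bool → G, (∀ i, b i ∉ B) ∧ Pairwise fun i j => (b i)⁻¹ * b j ∉ B := by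
  obtain ⟨x, y, z, hxy, hxz, hyz⟩ := h
  obtain ⟨x, rfl⟩ := QuotientGroup.mk_surjective x
  obtain ⟨y, rfl⟩ := QuotientGroup.mk_surjective y
  obtain ⟨z, rfl⟩ := QuotientGroup.mk_surjective z
  refine ⟨fun i => x⁻¹ * cond i y z, fun i => ?_, fun i j hij => ?_⟩
  · cases i
    exacts [mt QuotientGroup.eq.2 hxz, mt QuotientGroup.eq.2 hxy]
  · cases i <;> cases j <;> simp only [ne_eq, not_true_eq_false] at hij <;>
      simp only [cond_true, cond_false, mul_inv_rev, inv_inv, mul_assoc, mul_inv_cancel_left]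
    exacts [mt QuotientGroup.eq.2 hyz.symm, mt QuotientGroup.eq.2 hyz]

open scoped commutatorElement

namespace HNNExtension

variable {G : Type*} [Group G] {A B : Subgroup G} {ι : Type*}

def commutatorConj (φ : A ≃* B) (a b : G) : HNNExtension G A B φ :=
  ⁅(of a : HNNExtension G A B φ), t⁻¹ * of b * t⁆

variable {φ : A ≃* B}

-- A pair `(u, g)` stands for `t ^ u * of g`. The chain condition says that every pair but the last
-- has `g ∉ toSubgroup A B u`; unlike the one in `ReducedWord`, it survives prepending letters.
theorem exists_isChain_lift_mk_eq {a : G} {b : ι → G} (ha : a ∉ A) (hb : ∀ i, b i ∉ B)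
    (hbb : Pairwise fun i j => (b i)⁻¹ * b j ∉ B) (ℓ : ι × Bool) (L : List (ι × Bool))
    (hL : FreeGroup.IsReduced (ℓ :: L)) :
    ∃ rest : List (ℤˣ × G), ((-1, b ℓ.1) :: rest).IsChain (fun x _ => x.2 ∉ toSubgroup A B x.1) ∧
      FreeGroup.lift (fun i => commutatorConj φ a (b i)) (FreeGroup.mk (ℓ :: L)) =
        (of (if ℓ.2 then a else 1) : HNNExtension G A B φ) *
          (((-1, b ℓ.1) :: rest).map fun x => t ^ (x.1 : ℤ) * of x.2).prod := by
  induction L generalizing ℓ with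
  | nil =>
    obtain ⟨i, _ | _⟩ := ℓ
    · refine ⟨[(1, a), (-1, (b i)⁻¹), (1, a⁻¹)], ?_, ?_⟩
      · simp [List.isChain_cons, ha, hb]
      · simp [FreeGroup.lift_mk, commutatorConj, commutatorElement_def, mul_assoc]
    · refine ⟨[(1, a⁻¹), (-1, (b i)⁻¹), (1, 1)], ?_, ?_⟩
      · simp [List.isChain_cons, ha, hb]
      · simp [FreeGroup.lift_mk, commutatorConj, commutatorElement_def, mul_assoc]
  | cons ℓ' L ih =>
    obtain ⟨hred, hL'⟩ := FreeGroup.isReduced_cons_cons.1 hL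
    obtain ⟨rest, hchain, hprod⟩ := ih ℓ' hL'
    obtain ⟨i, s⟩ := ℓ
    obtain ⟨i', s'⟩ := ℓ'
    rw [← List.singleton_append, ← FreeGroup.mul_mk, map_mul, hprod]
    -- For letters of opposite signs the `a`-syllables cancel and the `B`-syllables merge;
    -- the merged syllable `(b i)⁻¹ * b i'` stays outside `B` since reducedness forces `i ≠ i'`.
    rcases s with _ | _ <;> rcases s' with _ | _
    · refine ⟨(1, a) :: (-1, (b i)⁻¹) :: (1, a⁻¹) :: (-1, b i') :: rest, ?_, ?_⟩
      · simp [List.isChain_cons, ha, hb, hchain]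
      · simp [FreeGroup.lift_mk, commutatorConj, commutatorElement_def, mul_assoc]
    · have hmerge := hbb (show i ≠ i' by simpa using hred)
      refine ⟨(1, a) :: (-1, (b i)⁻¹ * b i') :: rest, ?_, ?_⟩
      · simp [List.isChain_cons, ha, hb, hmerge, hchain.of_cons]
      · simp [FreeGroup.lift_mk, commutatorConj, commutatorElement_def, mul_assoc]
    · have hmerge := hbb (show i ≠ i' by simpa using hred)
      refine ⟨(1, a⁻¹) :: (-1, (b i)⁻¹ * b i') :: rest, ?_, ?_⟩
      · simp [List.isChain_cons, ha, hb, hmerge, hchain.of_cons]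
      · simp [FreeGroup.lift_mk, commutatorConj, commutatorElement_def, mul_assoc]
    · refine ⟨(1, a⁻¹) :: (-1, (b i)⁻¹) :: (1, a) :: (-1, b i') :: rest, ?_, ?_⟩
      · simp [List.isChain_cons, ha, hb, hchain]
      · simp [FreeGroup.lift_mk, commutatorConj, commutatorElement_def, mul_assoc]

theorem injective_lift_commutatorConj {a : G} {b : ι → G} (ha : a ∉ A) (hb : ∀ i, b i ∉ B)
    (hbb : Pairwise fun i j => (b i)⁻¹ * b j ∉ B) :
    Function.Injective (FreeGroup.lift fun i => commutatorConj φ a (b i)) := by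
  classical
  rw [injective_iff_map_eq_one]
  intro w hw
  by_contra hne
  obtain ⟨ℓ, L, hwL⟩ := List.exists_cons_of_ne_nil (mt FreeGroup.toWord_eq_nil_iff.1 hne)
  obtain ⟨rest, hchain, hprod⟩ :=
    exists_isChain_lift_mk_eq ha hb hbb ℓ L (hwL ▸ FreeGroup.isReduced_toWord)
  let r : NormalWord.ReducedWord G A B := ⟨if ℓ.2 then a else 1, _,
    hchain.imp fun x _ hx hmem => absurd hmem hx⟩
  have hr : r.prod φ ∈ of.range := by
    rw [NormalWord.ReducedWord.prod, ← hprod, ← hwL, FreeGroup.mk_toWord, hw]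
    exact one_mem _
  simpa [r] using ReducedWord.toList_eq_nil_of_mem_of_range φ r hr

theorem commute_inv_t_mul_of_mul_t {G : Type*} [CommGroup G] {A B : Subgroup G} {φ : A ≃* B}
    (g : G) {σ : G} (hσ : σ ∈ A) : Commute (t⁻¹ * of g * t : HNNExtension G A B φ) (of σ) := by
  have hσ' : (of σ : HNNExtension G A B φ) = t⁻¹ * of (φ ⟨σ, hσ⟩ : G) * t := by
    rw [equiv_eq_conj]
    group
  simpa [hσ'] using ((Commute.all g (φ ⟨σ, hσ⟩ : G)).map of).conj t⁻¹

end HNNExtension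

theorem hnn_nonamenable_centralizing_subgroup_general {H : Type*} [CommGroup H]
    (A B : Subgroup H) (φ : A ≃* B)
    (h2 : A ≠ ⊤)
    (h3 : ∃ x y z : H ⧸ B, x ≠ y ∧ x ≠ z ∧ y ≠ z) :
    ∃ G' : Subgroup (HNNExtension H A B φ),
      G' = Subgroup.closure ((Set.range fun h : H => (of h : HNNExtension H A B φ)) ∪
        (Set.range fun h : H => (t⁻¹ * of h * t : HNNExtension H A B φ))) ∧
      ¬ Amenable G' ∧
      ∀ g ∈ G', ∀ σ ∈ A, Commute g (of σ) := by
  refine ⟨_, rfl, ?_, fun g hg σ hσ => ?_⟩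
  · obtain ⟨a, ha⟩ := SetLike.exists_not_mem_of_ne_top A h2 rfl
    obtain ⟨b, hb, hbb⟩ := Subgroup.exists_notMem_pairwise_inv_mul_notMem h3
    refine Subgroup.not_amenable_of_injective_lift (fun i => ?_)
      (injective_lift_commutatorConj (φ := φ) ha hb hbb)
    rw [commutatorConj, commutatorElement_def]
    refine mul_mem (mul_mem (mul_mem ?_ ?_) (inv_mem ?_)) (inv_mem ?_) <;>
      exact Subgroup.subset_closure (by simp)
  · induction hg using Subgroup.closure_induction with
    | mem x hx =>
      rcases hx with ⟨h, rfl⟩ | ⟨h, rfl⟩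
      exacts [(Commute.all h σ).map of, commute_inv_t_mul_of_mul_t h hσ]
    | one => exact Commute.one_left _
    | mul x y _ _ hx hy => exact hx.mul_left hy
    | inv x _ hx => exact hx.inv_left

/-- Let `Γ = HNN(H,Σ,θ)` with `H` abelian, `2 ≤ |H/Σ| < ∞` and `3 ≤ |H/θ(Σ)|`. Then `Γ`
contains a non-amenable subgroup centralizing `Σ`, namely `G = ⟨H, t⁻¹Ht⟩`. -/
theorem hnn_nonamenable_centralizing_subgroup {H : Type*} [CommGroup H]
    (A B : Subgroup H) (φ : A ≃* B)
    (h2 : A ≠ ⊤) (hfin : A.index ≠ 0)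
    (h3 : ∃ x y z : H ⧸ B, x ≠ y ∧ x ≠ z ∧ y ≠ z) :
    ∃ G' : Subgroup (HNNExtension H A B φ),
      G' = Subgroup.closure ((Set.range fun h : H => (of h : HNNExtension H A B φ)) ∪
        (Set.range fun h : H => (t⁻¹ * of h * t : HNNExtension H A B φ))) ∧
      ¬ Amenable G' ∧
      ∀ g ∈ G', ∀ σ ∈ A, Commute g (of σ) :=
  hnn_nonamenable_centralizing_subgroup_general A B φ h2 h3
end

section
/- For nonzero integers n, m, the subgroup ⟨b⟩ of BS(n,m) is infinite cyclic, i.e., b has infinite order in BS(n,m). -/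
/-!
`BS(n,m)` acts on any field `K` in which `n` and `m` are nonzero by affine maps, with
`a` acting as `x ↦ (m/n)·x` and `b` as `x ↦ x + 1`: the defining relation holds because
conjugating the translation by `n` with the dilation by `m/n` gives the translation by `m`.
For `K = ℚ` the image of `b` is a translation by a non-torsion element, so `b` has infinite order.
-/

theorem Equiv.isOfFinOrder_addLeft_iff {α : Type*} [AddGroup α] (a : α) :
    IsOfFinOrder (Equiv.addLeft a) ↔ IsOfFinAddOrder a := by
  have addLeft_eq_one_iff (x : α) : Equiv.addLeft x = 1 ↔ x = 0 :=
    ⟨fun h => by simpa using congrArg (· 0) h, fun h => by ext; simp [h]⟩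
  simp only [isOfFinOrder_iff_pow_eq_one, isOfFinAddOrder_iff_nsmul_eq_zero,
    Equiv.nsmul_addLeft, addLeft_eq_one_iff]

namespace BS

variable {K : Type*} [Field K] {n m : ℤ}

def affineGens (hn : (n : K) ≠ 0) (hm : (m : K) ≠ 0) : Bool → Equiv.Perm K
  | true => Equiv.mulLeft₀ ((m : K) / n) (div_ne_zero hm hn)
  | false => Equiv.addLeft 1

theorem affineGens_rels (hn : (n : K) ≠ 0) (hm : (m : K) ≠ 0) :
    ∀ r ∈ BSRels n m, FreeGroup.lift (affineGens hn hm) r = 1 := by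
  rintro r rfl
  ext x
  simp only [map_mul, map_zpow, map_inv, FreeGroup.lift_apply_of, affineGens,
    Equiv.zsmul_addLeft, zsmul_eq_mul, mul_one, Equiv.Perm.inv_def, Equiv.addLeft_symm,
    Equiv.Perm.mul_apply, Equiv.coe_addLeft, Equiv.mulLeft₀_symm_apply, inv_div,
    Equiv.mulLeft₀_apply, Equiv.Perm.coe_one, id_eq]
  field_simp
  ring

def affineAction (hn : (n : K) ≠ 0) (hm : (m : K) ≠ 0) : BS n m →* Equiv.Perm K :=
  PresentedGroup.toGroup (affineGens_rels hn hm)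

theorem affineAction_b (hn : (n : K) ≠ 0) (hm : (m : K) ≠ 0) :
    affineAction hn hm (BS.b n m) = Equiv.addLeft 1 :=
  PresentedGroup.toGroup.of (affineGens_rels hn hm)

theorem not_isOfFinOrder_b [CharZero K] (hn : (n : K) ≠ 0) (hm : (m : K) ≠ 0) :
    ¬ IsOfFinOrder (BS.b n m) := fun h => by
  have := (affineAction hn hm).isOfFinOrder h
  rw [affineAction_b, Equiv.isOfFinOrder_addLeft_iff] at this
  exact not_isOfFinAddOrder_of_isAddTorsionFree one_ne_zero this

end BS

/-- For nonzero `n,m`, the generator `b` of `BS(n,m)` has infinite order, i.e. `⟨b⟩` is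
infinite cyclic. -/
theorem bs_b_infinite_order (n m : ℤ) (hn : n ≠ 0) (hm : m ≠ 0) :
    ¬ IsOfFinOrder (BS.b n m) ∧ Infinite (Subgroup.zpowers (BS.b n m)) := by
  have hb : ¬ IsOfFinOrder (BS.b n m) :=
    BS.not_isOfFinOrder_b (K := ℚ) (Int.cast_ne_zero.mpr hn) (Int.cast_ne_zero.mpr hm)
  exact ⟨hb, Set.infinite_coe_iff.mpr (infinite_zpowers.mpr hb)⟩
end
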